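/- Let 1 < p < q < ∞ and let (u,v) be weights on ℝⁿ. If M : L^{q'}(u^{1-q'}) → L^{p'}(v^{1-p'}) is bounded, then for any dyadic grid 𝒟, sparse family 𝒮 ⊂ 𝒟, and R ∈ 𝒟, the dual testing condition (∫ T^R(uχ_R)(x)^{p'} v(x)^{1-p'} dx)^{1/p'} ≤ C (∫_R u dx)^{1/q'} holds, where T^R f = Σ_{Q ∈ 𝒮, Q ⊇ R} f_Q χ_Q and C depends only on n, p, q and the operator norm of M. -/

import Mathlib

open MeasureTheory Set
open scoped ENNReal
noncomputable section

/-- Axis-parallel half-open cube with corner `a` and side length `l`. -/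
def cube (n : ℕ) (a : Fin n → ℝ) (l : ℝ) : Set (Fin n → ℝ) :=
  Set.univ.pi fun i => Set.Ico (a i) (a i + l)

/-- A (generalized) dyadic grid in ℝⁿ. -/
structure DyadicGrid (n : ℕ) where
  carrier : Set (Set (Fin n → ℝ))
  shape : ∀ Q ∈ carrier, ∃ (a : Fin n → ℝ) (k : ℤ), Q = cube n a ((2 : ℝ) ^ k)
  nested : ∀ Q ∈ carrier, ∀ P ∈ carrier, (Q ∩ P).Nonempty → Q ⊆ P ∨ P ⊆ Q
  partition : ∀ (k : ℤ) (x : Fin n → ℝ),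
    ∃! Q, Q ∈ carrier ∧ (∃ a, Q = cube n a ((2 : ℝ) ^ k)) ∧ x ∈ Q

/-- Hardy–Littlewood maximal function: supremum of averages over axis-parallel
cubes containing `x`. -/
def hlMaximal (n : ℕ) (f : (Fin n → ℝ) → ℝ≥0∞) (x : Fin n → ℝ) : ℝ≥0∞ :=
  ⨆ (a : Fin n → ℝ) (l : ℝ) (_ : 0 < l) (_ : x ∈ cube n a l),
    (∫⁻ y in cube n a l, f y) / volume (cube n a l)

/-- Dyadic maximal function associated with a dyadic grid `D`. -/
def dyMaximal {n : ℕ} (D : DyadicGrid n) (f : (Fin n → ℝ) → ℝ≥0∞) (x : Fin n → ℝ) : ℝ≥0∞ :=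
  ⨆ (Q : Set (Fin n → ℝ)) (_ : Q ∈ D.carrier) (_ : x ∈ Q),
    (∫⁻ y in Q, f y) / volume Q

/-- A sparse family inside the dyadic grid `D`, given as an indexed family
`F k = {Q_j^k}_j`: the cubes at each generation are pairwise disjoint,
`Ω_{k+1} ⊆ Ω_k` where `Ω_k = ⋃₀ F k`, and `|Ω_{k+1} ∩ Q| ≤ |Q|/2` for `Q ∈ F k`. -/
def IsSparse {n : ℕ} (D : DyadicGrid n) (F : ℤ → Set (Set (Fin n → ℝ))) : Prop :=
  (∀ k, F k ⊆ D.carrier) ∧ (∀ k, (F k).Pairwise Disjoint) ∧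
  (∀ k, ⋃₀ F (k + 1) ⊆ ⋃₀ F k) ∧
  (∀ k, ∀ Q ∈ F k, volume (⋃₀ F (k + 1) ∩ Q) ≤ volume Q / 2)

/-- The sparse (positive dyadic) operator `𝒜 f = Σ_{Q ∈ 𝒮} f_Q χ_Q` associated
with the sparse family `F`. -/
def sparseOp {n : ℕ} (F : ℤ → Set (Set (Fin n → ℝ))) (f : (Fin n → ℝ) → ℝ≥0∞)
    (x : Fin n → ℝ) : ℝ≥0∞ :=
  ∑' Q : {Q : Set (Fin n → ℝ) // ∃ k, Q ∈ F k},
    ((∫⁻ y in Q.1, f y) / volume Q.1) * Q.1.indicator 1 x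

/-- Outer truncation of the sparse operator:
`T^R f = Σ_{Q ∈ 𝒮, Q ⊇ R} f_Q χ_Q`. -/
def outerOp {n : ℕ} (F : ℤ → Set (Set (Fin n → ℝ))) (R : Set (Fin n → ℝ))
    (f : (Fin n → ℝ) → ℝ≥0∞) (x : Fin n → ℝ) : ℝ≥0∞ :=
  ∑' Q : {Q : Set (Fin n → ℝ) // (∃ k, Q ∈ F k) ∧ R ⊆ Q},
    ((∫⁻ y in Q.1, f y) / volume Q.1) * Q.1.indicator 1 x

/-!
The cubes of `𝒮` containing `R` all contain a point of `R`, so they are grid cubes with pairwise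
distinct volumes `|R| 2^m`. Since `R ⊆ Q`, each has `(uχ_R)_Q = (∫_R u) / |Q|`, and summing the
geometric series over those containing `x` gives
`T^R(uχ_R)(x) ≤ 2 sup_{Q ∋ x} (∫_R u) / |Q| ≤ 2 M(uχ_R)(x)`.
The testing bound is then the assumed bound for `M` at `f = uχ_R`, because
`f^{q'} u^{1-q'} ≤ uχ_R` pointwise.
-/

lemma ENNReal.rpow_mul_rpow_one_sub_le (a : ℝ≥0∞) {q : ℝ} (hq : 0 < q) :
    a ^ q * a ^ (1 - q) ≤ a := by
  rcases eq_or_ne a 0 with rfl | ha0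
  · rw [ENNReal.zero_rpow_of_pos hq, zero_mul]
  rcases eq_or_ne a ⊤ with rfl | hatop
  · exact le_top
  rw [← ENNReal.rpow_add _ _ ha0 hatop, add_sub_cancel, ENNReal.rpow_one]

lemma ENNReal.tsum_inv_two_pow_le_two_mul_iSup {ι : Type*} {e : ι → ℕ}
    (he : Function.Injective e) :
    ∑' i, (2⁻¹ : ℝ≥0∞) ^ e i ≤ 2 * ⨆ i, (2⁻¹ : ℝ≥0∞) ^ e i := by
  rcases isEmpty_or_nonempty ι with hι | hι
  · simp
  obtain ⟨i₀, hi₀⟩ : ∃ i₀, ∀ i, e i₀ ≤ e i := ⟨_, fun i => Function.argmin_le e i⟩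
  have hshift : Function.Injective fun i => e i - e i₀ := fun i j hij =>
    he (by have := hi₀ i; have := hi₀ j; simp only at hij; omega)
  calc ∑' i, (2⁻¹ : ℝ≥0∞) ^ e i
      = 2⁻¹ ^ e i₀ * ∑' i, (2⁻¹ : ℝ≥0∞) ^ (e i - e i₀) := by
        rw [← ENNReal.tsum_mul_left]
        congr 1 with i
        rw [← pow_add, Nat.add_sub_cancel' (hi₀ i)]
    _ ≤ 2⁻¹ ^ e i₀ * ∑' k : ℕ, (2⁻¹ : ℝ≥0∞) ^ k := by
        gcongr
        exact ENNReal.tsum_comp_le_tsum_of_injective hshift _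
    _ = 2 * 2⁻¹ ^ e i₀ := by
        rw [ENNReal.tsum_geometric, ENNReal.one_sub_inv_two, inv_inv, mul_comm]
    _ ≤ 2 * ⨆ i, (2⁻¹ : ℝ≥0∞) ^ e i := by
        gcongr
        exact le_iSup (fun i => (2⁻¹ : ℝ≥0∞) ^ e i) i₀

lemma lintegral_rpow_mul_le_const_mul {α : Type*} [MeasurableSpace α] {μ : Measure α}
    {p : ℝ} (hp : 0 < p) {c : ℝ≥0∞} (hc : c ≠ ⊤) {f g w : α → ℝ≥0∞}
    (hfg : ∀ x, f x ≤ c * g x) :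
    (∫⁻ x, f x ^ p * w x ∂μ) ^ (1 / p) ≤ c * (∫⁻ x, g x ^ p * w x ∂μ) ^ (1 / p) := by
  have hcp : c ^ p ≠ ⊤ := ENNReal.rpow_ne_top_of_nonneg hp.le hc
  calc (∫⁻ x, f x ^ p * w x ∂μ) ^ (1 / p)
      ≤ (∫⁻ x, c ^ p * (g x ^ p * w x) ∂μ) ^ (1 / p) := by
        refine ENNReal.rpow_le_rpow (lintegral_mono fun x => ?_) (by positivity)
        rw [← mul_assoc, ← ENNReal.mul_rpow_of_nonneg _ _ hp.le]
        exact mul_le_mul_left (ENNReal.rpow_le_rpow (hfg x) hp.le) _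
    _ = c * (∫⁻ x, g x ^ p * w x ∂μ) ^ (1 / p) := by
        rw [lintegral_const_mul' _ _ hcp, ENNReal.mul_rpow_of_nonneg _ _ (by positivity),
          ← ENNReal.rpow_mul, mul_one_div_cancel hp.ne', ENNReal.rpow_one]

lemma measurableSet_cube (n : ℕ) (a : Fin n → ℝ) (l : ℝ) : MeasurableSet (cube n a l) :=
  MeasurableSet.univ_pi fun _ => measurableSet_Ico

lemma volume_cube (n : ℕ) (a : Fin n → ℝ) {l : ℝ} (hl : 0 ≤ l) :
    volume (cube n a l) = ENNReal.ofReal (l ^ n) := by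
  rw [cube, volume_pi_pi]
  simp [Real.volume_Ico, ENNReal.ofReal_pow hl]

lemma mem_cube_self (n : ℕ) (a : Fin n → ℝ) {l : ℝ} (hl : 0 < l) : a ∈ cube n a l :=
  fun _ _ => ⟨le_rfl, lt_add_of_pos_right _ hl⟩

lemma cube_zero_eq_univ (a : Fin 0 → ℝ) (l : ℝ) : cube 0 a l = univ := by
  ext y; simp [cube, Set.mem_pi]

namespace DyadicGrid

variable {n : ℕ} (D : DyadicGrid n) {Q P : Set (Fin n → ℝ)}

lemma measurableSet (hQ : Q ∈ D.carrier) : MeasurableSet Q := by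
  obtain ⟨a, k, rfl⟩ := D.shape Q hQ
  exact measurableSet_cube n a _

lemma nonempty (hQ : Q ∈ D.carrier) : Q.Nonempty := by
  obtain ⟨a, k, rfl⟩ := D.shape Q hQ
  exact ⟨a, mem_cube_self n a (zpow_pos two_pos k)⟩

lemma setLIntegral_div_volume_le_hlMaximal (hQ : Q ∈ D.carrier) {x : Fin n → ℝ} (hx : x ∈ Q)
    (f : (Fin n → ℝ) → ℝ≥0∞) : (∫⁻ y in Q, f y) / volume Q ≤ hlMaximal n f x := by
  obtain ⟨a, k, rfl⟩ := D.shape Q hQ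
  exact le_iSup₂_of_le a ((2 : ℝ) ^ k) (le_iSup₂_of_le (zpow_pos two_pos k) hx le_rfl)

lemma eq_of_volume_eq (hQ : Q ∈ D.carrier) (hP : P ∈ D.carrier) {x : Fin n → ℝ} (hxQ : x ∈ Q)
    (hxP : x ∈ P) (hvol : volume Q = volume P) : Q = P := by
  obtain ⟨a, k, rfl⟩ := D.shape Q hQ
  obtain ⟨b, j, rfl⟩ := D.shape P hP
  rcases Nat.eq_zero_or_pos n with rfl | hn
  · rw [cube_zero_eq_univ, cube_zero_eq_univ]
  have hside : (2 : ℝ) ^ k = (2 : ℝ) ^ j := by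
    rw [volume_cube n a (by positivity), volume_cube n b (by positivity),
      ENNReal.ofReal_eq_ofReal_iff (by positivity) (by positivity)] at hvol
    exact (pow_left_inj₀ (by positivity) (by positivity) hn.ne').mp hvol
  obtain ⟨_, -, huniq⟩ := D.partition k x
  exact (huniq _ ⟨hQ, ⟨a, rfl⟩, hxQ⟩).trans (huniq _ ⟨hP, ⟨b, hside ▸ rfl⟩, hxP⟩).symm

lemma exists_volume_eq_mul_two_pow (hQ : Q ∈ D.carrier) (hP : P ∈ D.carrier) (hPQ : P ⊆ Q) :
    ∃ m : ℕ, volume Q = volume P * 2 ^ m := by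
  obtain ⟨a, k, rfl⟩ := D.shape Q hQ
  obtain ⟨b, j, rfl⟩ := D.shape P hP
  have hvol : ∀ (c : Fin n → ℝ) (i : ℤ),
      volume (cube n c ((2 : ℝ) ^ i)) = ENNReal.ofReal ((2 : ℝ) ^ (i * n)) := fun c i => by
    rw [volume_cube n c (by positivity), zpow_mul, zpow_natCast]
  have hle := measure_mono (μ := volume) hPQ
  rw [hvol, hvol, ENNReal.ofReal_le_ofReal_iff (by positivity),
    zpow_le_zpow_iff_right₀ one_lt_two] at hle
  refine ⟨(k * n - j * n).toNat, ?_⟩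
  rw [hvol, hvol, ← ENNReal.ofReal_ofNat 2, ← ENNReal.ofReal_pow zero_le_two,
    ← ENNReal.ofReal_mul (by positivity), ← zpow_natCast, ← zpow_add₀ two_ne_zero,
    Int.toNat_of_nonneg (by omega), add_sub_cancel]

lemma tsum_inv_volume_le_two_mul_iSup {ι : Type*} {R : Set (Fin n → ℝ)} (hR : R ∈ D.carrier)
    {Q : ι → Set (Fin n → ℝ)} (hQ : ∀ i, Q i ∈ D.carrier) (hQinj : Function.Injective Q)
    (hRQ : ∀ i, R ⊆ Q i) :
    ∑' i, (volume (Q i))⁻¹ ≤ 2 * ⨆ i, (volume (Q i))⁻¹ := by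
  obtain ⟨x, hx⟩ := D.nonempty hR
  choose e he using fun i => D.exists_volume_eq_mul_two_pow (hQ i) hR (hRQ i)
  have he_inj : Function.Injective e := fun i j hij =>
    hQinj (D.eq_of_volume_eq (hQ i) (hQ j) (hRQ i hx) (hRQ j hx) (by rw [he, he, hij]))
  have hinv : ∀ i, (volume (Q i))⁻¹ = (volume R)⁻¹ * 2⁻¹ ^ e i := fun i => by
    rw [he, ENNReal.mul_inv (Or.inr (by simp)) (Or.inr (by simp)), ENNReal.inv_pow]
  simp only [hinv]
  rw [ENNReal.tsum_mul_left, ← ENNReal.mul_iSup, mul_left_comm]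
  gcongr
  exact ENNReal.tsum_inv_two_pow_le_two_mul_iSup he_inj

end DyadicGrid

lemma outerOp_indicator_le_two_mul_hlMaximal {n : ℕ} (D : DyadicGrid n)
    {F : ℤ → Set (Set (Fin n → ℝ))} (hF : ∀ k, F k ⊆ D.carrier) {R : Set (Fin n → ℝ)}
    (hR : R ∈ D.carrier) (u : (Fin n → ℝ) → ℝ≥0∞) (x : Fin n → ℝ) :
    outerOp F R (R.indicator u) x ≤ 2 * hlMaximal n (R.indicator u) x := by
  set ι := {Q : Set (Fin n → ℝ) // (∃ k, Q ∈ F k) ∧ R ⊆ Q}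
  set I := ∫⁻ y in R, u y
  have hmem : ∀ Q : ι, Q.1 ∈ D.carrier := fun Q =>
    let ⟨k, hk⟩ := Q.2.1; hF k hk
  have hint : ∀ Q : ι, ∫⁻ y in Q.1, R.indicator u y = I := fun Q => by
    rw [lintegral_indicator (D.measurableSet hR), Measure.restrict_restrict (D.measurableSet hR),
      inter_eq_self_of_subset_left Q.2.2]
  have hsum : outerOp F R (R.indicator u) x = ∑' Q : {Q : ι | x ∈ Q.1}, I * (volume Q.1.1)⁻¹ := by
    rw [outerOp, tsum_subtype {Q : ι | x ∈ Q.1} fun Q => I * (volume Q.1)⁻¹]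
    congr 1 with Q
    by_cases hx : x ∈ Q.1 <;> simp [hx, hint, div_eq_mul_inv]
  calc outerOp F R (R.indicator u) x
      = I * ∑' Q : {Q : ι | x ∈ Q.1}, (volume Q.1.1)⁻¹ := by rw [hsum, ENNReal.tsum_mul_left]
    _ ≤ I * (2 * ⨆ Q : {Q : ι | x ∈ Q.1}, (volume Q.1.1)⁻¹) := by
        gcongr
        exact D.tsum_inv_volume_le_two_mul_iSup hR (fun Q => hmem Q.1)
          (Subtype.val_injective.comp Subtype.val_injective) (fun Q => Q.1.2.2)
    _ = 2 * ⨆ Q : {Q : ι | x ∈ Q.1}, (∫⁻ y in Q.1.1, R.indicator u y) / volume Q.1.1 := by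
        simp only [hint, div_eq_mul_inv]
        rw [mul_left_comm, ENNReal.mul_iSup]
    _ ≤ 2 * hlMaximal n (R.indicator u) x := by
        gcongr
        exact iSup_le fun Q => D.setLIntegral_div_volume_le_hlMaximal (hmem Q.1) Q.2 _

lemma lintegral_indicator_rpow_mul_rpow_one_sub_le {α : Type*} [MeasurableSpace α]
    {μ : Measure α} {s : Set α} (hs : MeasurableSet s) (u : α → ℝ≥0∞) {q : ℝ} (hq : 0 < q) :
    ∫⁻ x, s.indicator u x ^ q * u x ^ (1 - q) ∂μ ≤ ∫⁻ x in s, u x ∂μ := by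
  rw [← lintegral_indicator hs]
  refine lintegral_mono fun x => ?_
  by_cases hx : x ∈ s
  · simpa only [indicator_of_mem hx] using ENNReal.rpow_mul_rpow_one_sub_le (u x) hq
  · simp only [indicator_of_notMem hx, ENNReal.zero_rpow_of_pos hq, zero_mul, le_refl]

/-- if `M : L^{q'}(u^{1-q'}) → L^{p'}(v^{1-p'})`, then the outer
truncations `T^R` of sparse operators satisfy the dual Sawyer testing
condition, with constant depending only on `n, p, q` and the norm of `M`. -/
theorem stmt13 (n : ℕ) (p q p' q' : ℝ) (hp : 1 < p) (hpq : p < q)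
    (hp' : p' = p / (p - 1)) (hq' : q' = q / (q - 1))
    (N : ℝ≥0∞) (hN : N ≠ ⊤) :
    ∃ C : ℝ≥0∞, C ≠ ⊤ ∧
      ∀ u v : (Fin n → ℝ) → ℝ≥0∞,
        (∀ f : (Fin n → ℝ) → ℝ≥0∞,
          (∫⁻ x, hlMaximal n f x ^ p' * v x ^ (1 - p')) ^ (1 / p')
            ≤ N * (∫⁻ x, f x ^ q' * u x ^ (1 - q')) ^ (1 / q')) →
        ∀ (D : DyadicGrid n) (F : ℤ → Set (Set (Fin n → ℝ))), IsSparse D F →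
          ∀ R ∈ D.carrier,
            (∫⁻ x, outerOp F R (R.indicator u) x ^ p' * v x ^ (1 - p')) ^ (1 / p')
              ≤ C * (∫⁻ x in R, u x) ^ (1 / q') := by
  have hp'_pos : 0 < p' := hp' ▸ div_pos (by linarith) (by linarith)
  have hq'_pos : 0 < q' := hq' ▸ div_pos (by linarith) (by linarith)
  refine ⟨2 * N, ENNReal.mul_ne_top ENNReal.ofNat_ne_top hN, ?_⟩
  intro u v hM D F hsparse R hR
  calc (∫⁻ x, outerOp F R (R.indicator u) x ^ p' * v x ^ (1 - p')) ^ (1 / p')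
      ≤ 2 * (∫⁻ x, hlMaximal n (R.indicator u) x ^ p' * v x ^ (1 - p')) ^ (1 / p') :=
        lintegral_rpow_mul_le_const_mul hp'_pos ENNReal.ofNat_ne_top
          (outerOp_indicator_le_two_mul_hlMaximal D hsparse.1 hR u)
    _ ≤ 2 * (N * (∫⁻ x, R.indicator u x ^ q' * u x ^ (1 - q')) ^ (1 / q')) := by
        gcongr
        exact hM _
    _ ≤ 2 * N * (∫⁻ x in R, u x) ^ (1 / q') := by
        rw [mul_assoc]
        gcongr 2 * (N * ?_ ^ _)
        exact lintegral_indicator_rpow_mul_rpow_one_sub_le (D.measurableSet hR) u hq'_pos
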